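/- arXiv:1709.02461 — 4 statements merged into one kernel-verified Lean document; each statement's English description precedes it below -/
import Mathlib

section
/- Let A be Metzler and suppose ζ > 0 with Aζ < 0 and z > 0 with zᵀA < 0 (entrywise). Define the diagonal matrix P with P_{ii} = z_i/ζ_i. Then P is positive definite and AᵀP + PA is negative definite. -/
/-!
For a symmetric matrix `S` and `ζ` with no zero entry, substituting `x = ζ y` gives
`xᵀ S x = ∑ᵢ (yᵢ² ζᵢ) (S ζ)ᵢ - ½ ∑ᵢⱼ Sᵢⱼ ζᵢ ζⱼ (yᵢ - yⱼ)²`.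
If `S` is Metzler, `ζ > 0` and `S ζ < 0`, the first sum is negative for `x ≠ 0` and the second
is nonnegative, so `S` is negative definite. With `P = diag(z / ζ)`, the symmetric Metzler matrix
`S = AᵀP + PA` satisfies `S ζ = Aᵀ z + P (A ζ) < 0`, since `P ζ = z`.
-/

open Matrix

namespace Matrix

variable {ι R : Type*} [Fintype ι]

def IsMetzler [Zero R] [LE R] (A : Matrix ι ι R) : Prop :=
  ∀ i j, i ≠ j → 0 ≤ A i j

theorem two_mul_dotProduct_mulVec_eq_sub_sum_sq [Field R] {S : Matrix ι ι R} (hS : S.IsSymm)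
    {ζ : ι → R} (hζ : ∀ i, ζ i ≠ 0) (x : ι → R) :
    2 * (x ⬝ᵥ S *ᵥ x) = 2 * ∑ i, x i ^ 2 / ζ i * (S *ᵥ ζ) i -
      ∑ i, ∑ j, S i j * ζ i * ζ j * (x i / ζ i - x j / ζ j) ^ 2 := by
  have hexpand : ∑ i, ∑ j, S i j * ζ i * ζ j * (x i / ζ i - x j / ζ j) ^ 2 =
      ∑ i, ∑ j, S i j * ζ i * ζ j * (x i / ζ i) ^ 2 +
        ∑ i, ∑ j, S i j * ζ i * ζ j * (x j / ζ j) ^ 2 - 2 * (x ⬝ᵥ S *ᵥ x) := by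
    simp only [dotProduct, mulVec, Finset.mul_sum, ← Finset.sum_add_distrib,
      ← Finset.sum_sub_distrib]
    refine Finset.sum_congr rfl fun i _ => Finset.sum_congr rfl fun j _ => ?_
    field_simp [hζ i, hζ j]
    ring
  have hswap : ∑ i, ∑ j, S i j * ζ i * ζ j * (x j / ζ j) ^ 2 =
      ∑ i, ∑ j, S i j * ζ i * ζ j * (x i / ζ i) ^ 2 := by
    rw [Finset.sum_comm]
    simp only [hS.apply]
    exact Finset.sum_congr rfl fun i _ => Finset.sum_congr rfl fun j _ => by ring
  have hdiag : ∑ i, x i ^ 2 / ζ i * (S *ᵥ ζ) i =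
      ∑ i, ∑ j, S i j * ζ i * ζ j * (x i / ζ i) ^ 2 := by
    simp only [mulVec, dotProduct, Finset.mul_sum]
    refine Finset.sum_congr rfl fun i _ => Finset.sum_congr rfl fun j _ => ?_
    field_simp [hζ i]
  rw [hexpand, hswap, hdiag]
  ring

theorem IsMetzler.neg_posDef_of_mulVec_neg {S : Matrix ι ι ℝ} (hM : S.IsMetzler)
    (hS : S.IsSymm) {ζ : ι → ℝ} (hζ : ∀ i, 0 < ζ i) (hSζ : ∀ i, (S *ᵥ ζ) i < 0) :
    (-S).PosDef := by
  refine posDef_iff_dotProduct_mulVec.mpr ⟨hS.neg, fun x hx => ?_⟩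
  obtain ⟨k, hk : x k ≠ 0⟩ := Function.ne_iff.mp hx
  have hdiag : ∑ i, x i ^ 2 / ζ i * (S *ᵥ ζ) i < 0 := by
    refine Finset.sum_neg' (fun i _ => ?_) ⟨k, Finset.mem_univ k, ?_⟩
    · exact mul_nonpos_of_nonneg_of_nonpos (div_nonneg (sq_nonneg _) (hζ i).le) (hSζ i).le
    · exact mul_neg_of_pos_of_neg (div_pos (by positivity) (hζ k)) (hSζ k)
  have hgap : 0 ≤ ∑ i, ∑ j, S i j * ζ i * ζ j * (x i / ζ i - x j / ζ j) ^ 2 := by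
    refine Finset.sum_nonneg fun i _ => Finset.sum_nonneg fun j _ => ?_
    rcases eq_or_ne i j with rfl | hij
    · simp
    · have := hζ i; have := hζ j; have := hM i j hij
      positivity
  have := two_mul_dotProduct_mulVec_eq_sub_sum_sq hS (fun i => (hζ i).ne') x
  rw [star_trivial, neg_mulVec, dotProduct_neg]
  linarith

theorem isSymm_transpose_mul_add_mul [CommSemiring R] {D : Matrix ι ι R} (hD : D.IsSymm)
    (A : Matrix ι ι R) : (Aᵀ * D + D * A).IsSymm := by
  simpa [transpose_mul, hD.eq] using isSymm_transpose_add_self (D * A)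

variable [DecidableEq ι]

theorem IsMetzler.transpose_mul_diagonal_add_diagonal_mul [Semiring R] [PartialOrder R]
    [IsOrderedRing R] {A : Matrix ι ι R} (hA : A.IsMetzler) {d : ι → R} (hd : ∀ i, 0 ≤ d i) :
    (Aᵀ * diagonal d + diagonal d * A).IsMetzler := fun i j hij => by
  simp only [add_apply, mul_diagonal, diagonal_mul, transpose_apply]
  exact add_nonneg (mul_nonneg (hA j i hij.symm) (hd j)) (mul_nonneg (hd i) (hA i j hij))

theorem transpose_mul_diagonal_add_diagonal_mul_mulVec [CommSemiring R] (A : Matrix ι ι R)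
    (d ζ : ι → R) :
    (Aᵀ * diagonal d + diagonal d * A) *ᵥ ζ = (d * ζ) ᵥ* A + d * (A *ᵥ ζ) := by
  have hdiag (v : ι → R) : diagonal d *ᵥ v = d * v := funext (mulVec_diagonal d v)
  rw [add_mulVec, ← mulVec_mulVec, ← mulVec_mulVec, hdiag, hdiag, mulVec_transpose]

end Matrix

/-- For a Metzler A with ζ > 0, Aζ < 0 and z > 0, zᵀA < 0, the diagonal matrix
P with P_{ii} = z_i / ζ_i is positive definite and AᵀP + PA is negative definite. -/
theorem metzler_diagonal_lyapunov {n : ℕ} (A : Matrix (Fin n) (Fin n) ℝ)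
    (hMetzler : ∀ i j, i ≠ j → 0 ≤ A i j)
    (ζ z : Fin n → ℝ) (hζ : ∀ i, 0 < ζ i) (hAζ : ∀ i, A.mulVec ζ i < 0)
    (hz : ∀ i, 0 < z i) (hzA : ∀ j, A.vecMul z j < 0) :
    (Matrix.diagonal (fun i => z i / ζ i)).PosDef ∧
    (-(Aᵀ * Matrix.diagonal (fun i => z i / ζ i) +
        Matrix.diagonal (fun i => z i / ζ i) * A)).PosDef := by
  set d : Fin n → ℝ := fun i => z i / ζ i
  have hd : ∀ i, 0 < d i := fun i => div_pos (hz i) (hζ i)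
  have hdζ : d * ζ = z := funext fun i => div_mul_cancel₀ (z i) (hζ i).ne'
  have hSymm := isSymm_transpose_mul_add_mul (isSymm_diagonal d) A
  have hSMetzler := IsMetzler.transpose_mul_diagonal_add_diagonal_mul hMetzler fun i => (hd i).le
  refine ⟨posDef_diagonal_iff.mpr hd, hSMetzler.neg_posDef_of_mulVec_neg hSymm hζ fun i => ?_⟩
  rw [transpose_mul_diagonal_add_diagonal_mul_mulVec, hdζ]
  exact add_neg (hzA i) (mul_neg_of_pos_of_neg (hd i) (hAζ i))
end

section
/- Let J, Q, R ∈ ℝ^{n×n} with J skew-symmetric, Q positive semidefinite, and R positive semidefinite. Then every eigenvalue of (J − R)Q has nonpositive real part. -/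
/-! For an eigenpair `(μ, v)` of `(J - R) Q`, pair the eigen-equation with `w = Q v`: this gives
`μ ⟪v, Q v⟫ = ⟪w, J w⟫ - ⟪w, R w⟫`, whose right side has real part `-⟪w, R w⟫ ≤ 0` because `J` is
skew. If `⟪v, Q v⟫ > 0` this forces `Re μ ≤ 0`; otherwise `Q v = 0`, so `μ v = 0` and `μ = 0`. -/

open Matrix
open scoped ComplexOrder

namespace Matrix

variable {n 𝕜 : Type*} [Fintype n] [RCLike 𝕜]

lemma re_star_dotProduct_mulVec_eq_zero_of_conjTranspose_eq_neg {J : Matrix n n 𝕜}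
    (hJ : Jᴴ = -J) (w : n → 𝕜) : RCLike.re (star w ⬝ᵥ (J *ᵥ w)) = 0 := by
  have hstar : star (star w ⬝ᵥ (J *ᵥ w)) = -(star w ⬝ᵥ (J *ᵥ w)) := by
    calc star (star w ⬝ᵥ (J *ᵥ w)) = (star w ᵥ* Jᴴ) ⬝ᵥ w := by
          rw [← star_dotProduct_star, star_mulVec, star_star]
      _ = -(star w ⬝ᵥ (J *ᵥ w)) := by
          rw [← dotProduct_mulVec, hJ, neg_mulVec, dotProduct_neg]
  have := congrArg RCLike.re hstar
  rw [RCLike.star_def, RCLike.conj_re, map_neg] at this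
  linarith

lemma PosSemidef.map_ofReal [DecidableEq n] {Q : Matrix n n ℝ} (hQ : Q.PosSemidef) :
    (Q.map ((↑) : ℝ → 𝕜)).PosSemidef := by
  obtain ⟨B, rfl⟩ : ∃ B : Matrix n n ℝ, Q = star B * B := by
    open scoped MatrixOrder in
    exact CStarAlgebra.nonneg_iff_eq_star_mul_self.mp hQ.nonneg
  have hmap : (star B * B).map ((↑) : ℝ → 𝕜) =
      (B.map ((↑) : ℝ → 𝕜))ᴴ * B.map ((↑) : ℝ → 𝕜) := by
    rw [← conjTranspose_map _ fun _ ↦ (RCLike.conj_ofReal _).symm]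
    exact Matrix.map_mul (f := algebraMap ℝ 𝕜)
  rw [hmap]
  exact posSemidef_conjTranspose_mul_self _

lemma exists_mulVec_eq_smul_of_mem_spectrum {K : Type*} [Field K] [DecidableEq n]
    {A : Matrix n n K} {μ : K} (hμ : μ ∈ spectrum K A) : ∃ v ≠ 0, A *ᵥ v = μ • v := by
  rw [← spectrum_toLin', ← Module.End.hasEigenvalue_iff_mem_spectrum] at hμ
  obtain ⟨v, hv⟩ := hμ.exists_hasEigenvector
  exact ⟨v, hv.2, by simpa using hv.apply_eq_smul⟩


theorem re_le_zero_of_mulVec_eq_smul {J Q R : Matrix n n 𝕜} (hJ : Jᴴ = -J)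
    (hQ : Q.PosSemidef) (hR : R.PosSemidef) {μ : 𝕜} {v : n → 𝕜} (hv : v ≠ 0)
    (hμ : ((J - R) * Q) *ᵥ v = μ • v) : RCLike.re μ ≤ 0 := by
  set w := Q *ᵥ v
  set t := star v ⬝ᵥ w
  obtain ⟨ht_re, ht_im⟩ : 0 ≤ RCLike.re t ∧ RCLike.im t = 0 :=
    RCLike.nonneg_iff.mp (hQ.dotProduct_mulVec_nonneg v)
  have hw_v : star w ⬝ᵥ v = t := by
    rw [star_mulVec, hQ.isHermitian.eq, ← dotProduct_mulVec]
  have hkey : μ * t = star w ⬝ᵥ (J *ᵥ w) - star w ⬝ᵥ (R *ᵥ w) := by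
    rw [← hw_v, ← smul_eq_mul, ← dotProduct_smul, ← hμ, ← mulVec_mulVec, sub_mulVec,
      dotProduct_sub]
  have hprod : RCLike.re μ * RCLike.re t ≤ 0 := by
    have := congrArg RCLike.re hkey
    rw [RCLike.mul_re, ht_im, mul_zero, sub_zero, map_sub,
      re_star_dotProduct_mulVec_eq_zero_of_conjTranspose_eq_neg hJ, zero_sub] at this
    linarith [hR.re_dotProduct_nonneg w]
  by_contra! hpos
  have ht : t = 0 := RCLike.ext (by rw [map_zero]; nlinarith) (by simpa using ht_im)
  have hw : w = 0 := (hQ.dotProduct_mulVec_zero_iff v).mp ht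
  have : μ • v = 0 := by rw [← hμ, ← mulVec_mulVec, show Q *ᵥ v = 0 from hw, mulVec_zero]
  have hμ0 : μ = 0 := by simpa [hv] using this
  simp [hμ0] at hpos

theorem re_le_zero_of_mem_spectrum_sub_mul [DecidableEq n] {J Q R : Matrix n n 𝕜}
    (hJ : Jᴴ = -J) (hQ : Q.PosSemidef) (hR : R.PosSemidef) :
    ∀ μ ∈ spectrum 𝕜 ((J - R) * Q), RCLike.re μ ≤ 0 := fun _ hμ ↦
  let ⟨_, hv, hμv⟩ := exists_mulVec_eq_smul_of_mem_spectrum hμ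
  re_le_zero_of_mulVec_eq_smul hJ hQ hR hv hμv

end Matrix

/-- If J is skew-symmetric and Q, R are PSD, every eigenvalue of (J − R)Q has
nonpositive real part. -/
theorem dh_spectrum_nonpos_re {n : ℕ} (J Q R : Matrix (Fin n) (Fin n) ℝ)
    (hJ : Jᵀ = -J) (hQ : Q.PosSemidef) (hR : R.PosSemidef) :
    ∀ μ ∈ spectrum ℂ (((J - R) * Q).map (Complex.ofReal ·)), μ.re ≤ 0 := by
  have hmap : ((J - R) * Q).map (Complex.ofReal ·) =
      (J.map (↑) - R.map (↑)) * Q.map (↑) :=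
    (map_mul Complex.ofRealHom.mapMatrix _ _).trans
      (congrArg (· * _) (map_sub Complex.ofRealHom.mapMatrix _ _))
  have hJc : (J.map ((↑) : ℝ → ℂ))ᴴ = -J.map (↑) := by
    rw [← conjTranspose_map _ fun _ ↦ (Complex.conj_ofReal _).symm,
      conjTranspose_eq_transpose_of_trivial, hJ, Matrix.map_neg _ Complex.ofReal_neg]
  rw [hmap]
  exact re_le_zero_of_mem_spectrum_sub_mul hJc hQ.map_ofReal hR.map_ofReal
end

section
/- Let J be skew-symmetric, Q ⪰ 0, R ⪰ 0 be n×n real matrices. If (J − R)Q has a purely imaginary eigenvalue iω with eigenvector x ∈ ℂⁿ, then RQx = 0 and x is also an eigenvector of JQ with eigenvalue iω. -/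
/-!
Put `y = Q x`. Pairing `(J - R) y = iω x` with `y` gives `y* J y - y* R y = iω · x* Q x`.
Since `J` is skew, `y* J y` is purely imaginary, and so is the right-hand side because `x* Q x`
is real. Hence the nonnegative number `y* R y` vanishes, which for `R ⪰ 0` forces `R y = 0`;
then `J Q x = (J - R) Q x + R Q x = iω x`.
-/

open Matrix ComplexOrder

namespace Matrix

variable {l m n : Type*}

theorem map_ofReal_mul [Fintype m] (A : Matrix l m ℝ) (B : Matrix m n ℝ) :
    (A * B).map (Complex.ofReal ·) = A.map (Complex.ofReal ·) * B.map (Complex.ofReal ·) :=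
  Matrix.map_mul (f := Complex.ofRealHom)

theorem map_ofReal_sub (A B : Matrix m n ℝ) :
    (A - B).map (Complex.ofReal ·) = A.map (Complex.ofReal ·) - B.map (Complex.ofReal ·) :=
  Matrix.map_sub _ Complex.ofReal_sub A B

theorem conjTranspose_map_ofReal (A : Matrix m n ℝ) :
    (A.map (Complex.ofReal ·))ᴴ = Aᵀ.map (Complex.ofReal ·) := by
  rw [← conjTranspose_eq_transpose_of_trivial, conjTranspose_map _ fun _ ↦ by simp]

theorem PosSemidef.map_ofReal_s7 [Fintype n] {M : Matrix n n ℝ} (hM : M.PosSemidef) :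
    (M.map (Complex.ofReal ·)).PosSemidef := by
  classical
  open scoped MatrixOrder in
  obtain ⟨B, rfl⟩ := CStarAlgebra.nonneg_iff_eq_star_mul_self.mp hM.nonneg
  rw [map_ofReal_mul, star_eq_conjTranspose, conjTranspose_eq_transpose_of_trivial,
    ← conjTranspose_map_ofReal]
  exact posSemidef_conjTranspose_mul_self _

variable {𝕜 : Type*} [RCLike 𝕜] [Fintype n]

theorem re_dotProduct_mulVec_eq_zero_of_conjTranspose_eq_neg {A : Matrix n n 𝕜} (hA : Aᴴ = -A)
    (y : n → 𝕜) : RCLike.re (star y ⬝ᵥ A *ᵥ y) = 0 := by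
  have h : star (star y ⬝ᵥ A *ᵥ y) = -(star y ⬝ᵥ A *ᵥ y) := by
    rw [← star_dotProduct_star, star_star, star_mulVec, ← dotProduct_mulVec, hA, neg_mulVec,
      dotProduct_neg]
  have := congrArg RCLike.re h
  rw [RCLike.star_def, RCLike.conj_re, map_neg] at this
  linarith

theorem PosSemidef.mulVec_eq_zero_of_re_dotProduct_eq_zero {B : Matrix n n 𝕜} (hB : B.PosSemidef)
    {y : n → 𝕜} (hy : RCLike.re (star y ⬝ᵥ B *ᵥ y) = 0) : B *ᵥ y = 0 := by
  refine (hB.dotProduct_mulVec_zero_iff y).mp (RCLike.ext ?_ ?_)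
  · simpa using hy
  · simpa using (RCLike.nonneg_iff.mp (hB.dotProduct_mulVec_nonneg y)).2

theorem mul_mulVec_eq_zero_and_eq_smul_of_sub_mul_mulVec_eq_smul {A B C : Matrix n n 𝕜}
    (hA : Aᴴ = -A) (hB : B.PosSemidef) (hC : C.PosSemidef) {μ : 𝕜} (hμ : RCLike.re μ = 0)
    {x : n → 𝕜} (hx : ((A - B) * C) *ᵥ x = μ • x) :
    (B * C) *ᵥ x = 0 ∧ (A * C) *ᵥ x = μ • x := by
  set y := C *ᵥ x
  have hyx : star y ⬝ᵥ x = star x ⬝ᵥ C *ᵥ x := by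
    rw [star_mulVec, hC.1.eq, ← dotProduct_mulVec]
  have hCx_real : RCLike.im (star x ⬝ᵥ C *ᵥ x) = 0 :=
    (RCLike.nonneg_iff.mp (hC.dotProduct_mulVec_nonneg x)).2
  have hpair : star y ⬝ᵥ A *ᵥ y - star y ⬝ᵥ B *ᵥ y = μ * star x ⬝ᵥ C *ᵥ x := by
    rw [← dotProduct_sub, ← sub_mulVec, mulVec_mulVec, hx, dotProduct_smul, smul_eq_mul, hyx]
  have hBy : B *ᵥ y = 0 := by
    refine hB.mulVec_eq_zero_of_re_dotProduct_eq_zero ?_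
    have := congrArg RCLike.re hpair
    rw [map_sub, re_dotProduct_mulVec_eq_zero_of_conjTranspose_eq_neg hA, RCLike.mul_re, hμ,
      hCx_real] at this
    linarith
  have hBCx : (B * C) *ᵥ x = 0 := by rw [← mulVec_mulVec, hBy]
  refine ⟨hBCx, ?_⟩
  rw [← sub_add_cancel A B, add_mul, add_mulVec, hx, hBCx, add_zero]

end Matrix

theorem dh_imaginary_eigenvalue_general {n : ℕ} (J Q R : Matrix (Fin n) (Fin n) ℝ)
    (hJ : Jᵀ = -J) (hQ : Q.PosSemidef) (hR : R.PosSemidef)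
    (ω : ℝ) (x : Fin n → ℂ)
    (heig : (((J - R) * Q).map (Complex.ofReal ·)).mulVec x = (Complex.I * ω) • x) :
    ((R * Q).map (Complex.ofReal ·)).mulVec x = 0 ∧
    ((J * Q).map (Complex.ofReal ·)).mulVec x = (Complex.I * ω) • x := by
  have hJ_skew : (J.map (Complex.ofReal ·))ᴴ = -J.map (Complex.ofReal ·) := by
    rw [conjTranspose_map_ofReal, hJ, Matrix.map_neg _ Complex.ofReal_neg]
  rw [map_ofReal_mul, map_ofReal_sub] at heig
  rw [map_ofReal_mul, map_ofReal_mul]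
  exact mul_mulVec_eq_zero_and_eq_smul_of_sub_mul_mulVec_eq_smul hJ_skew hR.map_ofReal_s7
    hQ.map_ofReal_s7 (by simp) heig

/-- If (J − R)Q has a purely imaginary eigenvalue iω with eigenvector x, then
RQx = 0 and x is an eigenvector of JQ with eigenvalue iω. -/
theorem dh_imaginary_eigenvalue {n : ℕ} (J Q R : Matrix (Fin n) (Fin n) ℝ)
    (hJ : Jᵀ = -J) (hQ : Q.PosSemidef) (hR : R.PosSemidef)
    (ω : ℝ) (x : Fin n → ℂ) (hx : x ≠ 0)
    (heig : (((J - R) * Q).map (Complex.ofReal ·)).mulVec x = (Complex.I * ω) • x) :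
    ((R * Q).map (Complex.ofReal ·)).mulVec x = 0 ∧
    ((J * Q).map (Complex.ofReal ·)).mulVec x = (Complex.I * ω) • x :=
  dh_imaginary_eigenvalue_general J Q R hJ hQ hR ω x heig
end

section
/- If X ∈ ℝ^{n×n} satisfies XP + PXᵀ ⪯ 0 for some positive definite P, then X admits a dissipative-Hamiltonian representation X = (J − R)Q with J = (XP − PXᵀ)/2 skew-symmetric, R = (−XP − PXᵀ)/2 positive semidefinite, and Q = P⁻¹ positive definite. -/
/-!
`J` and `-R` are the skew-symmetric and symmetric parts of `XP` (as `P` is symmetric), so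
`J - R = XP` and `(J - R)P⁻¹ = X`; `R ⪰ 0` is the Lyapunov inequality itself.
-/

open Matrix

theorem Matrix.transpose_smul_sub_transpose {n R α : Type*} [Monoid R] [AddCommGroup α]
    [DistribMulAction R α] (c : R) (A : Matrix n n α) : (c • (A - Aᵀ))ᵀ = -(c • (A - Aᵀ)) := by
  rw [transpose_smul, transpose_sub, transpose_transpose, ← smul_neg, neg_sub]

theorem inv_two_smul_sub_sub_inv_two_smul_neg_sub {K M : Type*} [Field K] [NeZero (2 : K)]
    [AddCommGroup M] [Module K M] (a b : M) :
    (2 : K)⁻¹ • (a - b) - (2 : K)⁻¹ • (-a - b) = a := by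
  match_scalars <;> field_simp <;> ring

/-- Any X with XP + PXᵀ ⪯ 0 for some P ≻ 0 admits a DH representation. -/
theorem dh_representation {n : ℕ} (X P : Matrix (Fin n) (Fin n) ℝ)
    (hP : P.PosDef) (hLyap : (-(X * P + P * Xᵀ)).PosSemidef) :
    ((2 : ℝ)⁻¹ • (X * P - P * Xᵀ))ᵀ = -((2 : ℝ)⁻¹ • (X * P - P * Xᵀ)) ∧
    ((2 : ℝ)⁻¹ • (-(X * P) - P * Xᵀ)).PosSemidef ∧
    P⁻¹.PosDef ∧
    ((2 : ℝ)⁻¹ • (X * P - P * Xᵀ) - (2 : ℝ)⁻¹ • (-(X * P) - P * Xᵀ)) * P⁻¹ = X := by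
  have hXP : (X * P)ᵀ = P * Xᵀ := by
    rw [transpose_mul, (isHermitian_iff_isSymm.mp hP.isHermitian).eq]
  refine ⟨?_, ?_, hP.inv, ?_⟩
  · rw [← hXP]
    exact transpose_smul_sub_transpose _ _
  · rw [← neg_add']
    exact hLyap.smul (by norm_num)
  · rw [inv_two_smul_sub_sub_inv_two_smul_neg_sub,
      mul_nonsing_inv_cancel_right _ _ ((isUnit_iff_isUnit_det P).mp hP.isUnit)]
end
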